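/- C_{max,Δ}(ρ) := log₂ min{λ : ρ ≤ λΔ(ρ)} is monotone under DIO: if Λ is a CPTP map with Λ∘Δ = Δ∘Λ, then C_{max,Δ}(Λ(ρ)) ≤ C_{max,Δ}(ρ) for every density operator ρ. -/

import Mathlib

open Matrix
open scoped ComplexOrder

/-!
A positive map commuting with `Δ` carries the feasible set `{λ ≥ 0 : λ Δ(ρ) - ρ ≥ 0}` of `ρ`
into that of `Λ(ρ)`, so the infimum can only decrease. To rule out the junk values `sInf ∅ = 0`
and `logb 2 0 = 0`: the feasible set of a state is nonempty, because
`2 (d Δ(ρ) - ρ) = ∑ᵢⱼ Dᵢⱼ ρ Dᵢⱼ` with `Dᵢⱼ = Eᵢᵢ - Eⱼⱼ`, and taking traces shows that all its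
elements are at least `1`.
-/

/-- `E` is completely positive: `id_k ⊗ E` maps positive semidefinite matrices to
positive semidefinite matrices for every `k`. -/
def IsCP (dA dB : ℕ)
    (E : Matrix (Fin dA) (Fin dA) ℂ →ₗ[ℂ] Matrix (Fin dB) (Fin dB) ℂ) : Prop :=
  ∀ (k : ℕ) (M : Matrix (Fin k × Fin dA) (Fin k × Fin dA) ℂ), M.PosSemidef →
    (Matrix.of fun p q => E (Matrix.of fun i j => M (p.1, i) (q.1, j)) p.2 q.2 :
      Matrix (Fin k × Fin dB) (Fin k × Fin dB) ℂ).PosSemidef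

/-- `E` is trace preserving. -/
def IsTP (dA dB : ℕ)
    (E : Matrix (Fin dA) (Fin dA) ℂ →ₗ[ℂ] Matrix (Fin dB) (Fin dB) ℂ) : Prop :=
  ∀ X : Matrix (Fin dA) (Fin dA) ℂ, (E X).trace = X.trace


/-- The completely dephasing channel `Δ` (keeping only diagonal entries). -/
def deph {n : ℕ} (M : Matrix (Fin n) (Fin n) ℂ) : Matrix (Fin n) (Fin n) ℂ :=
  Matrix.diagonal fun i => M i i

/-- The set whose infimum is `2 ^ C_{max,Δ}(ρ)`. -/
def cmaxFeasible {n : ℕ} (ρ : Matrix (Fin n) (Fin n) ℂ) : Set ℝ :=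
  {lam : ℝ | 0 ≤ lam ∧ ((lam : ℂ) • deph ρ - ρ).PosSemidef}

lemma deph_trace {n : ℕ} (M : Matrix (Fin n) (Fin n) ℂ) : (deph M).trace = M.trace := by
  simp [deph, Matrix.trace]

lemma IsCP.posSemidef_apply {dA dB : ℕ}
    {E : Matrix (Fin dA) (Fin dA) ℂ →ₗ[ℂ] Matrix (Fin dB) (Fin dB) ℂ} (hE : IsCP dA dB E)
    {N : Matrix (Fin dA) (Fin dA) ℂ} (hN : N.PosSemidef) : (E N).PosSemidef := by
  have h := (hE 1 (N.submatrix Prod.snd Prod.snd) (hN.submatrix _)).submatrix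
    fun i : Fin dB => ((0 : Fin 1), i)
  convert h using 1
  ext i j
  rfl

lemma cmaxFeasible_subset_apply {d : ℕ}
    {Λ : Matrix (Fin d) (Fin d) ℂ →ₗ[ℂ] Matrix (Fin d) (Fin d) ℂ} (hCP : IsCP d d Λ)
    (hcov : ∀ X, Λ (deph X) = deph (Λ X)) (ρ : Matrix (Fin d) (Fin d) ℂ) :
    cmaxFeasible ρ ⊆ cmaxFeasible (Λ ρ) := by
  rintro lam ⟨hlam, hpsd⟩
  refine ⟨hlam, ?_⟩
  simpa only [map_sub, map_smul, hcov] using hCP.posSemidef_apply hpsd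

lemma sum_sum_ite_sub_mul_ite_sub {ι R : Type*} [Fintype ι] [DecidableEq ι] [CommRing R]
    (a b : ι) :
    ∑ i, ∑ j, ((if a = i then (1 : R) else 0) - if a = j then 1 else 0) *
        ((if b = i then 1 else 0) - if b = j then 1 else 0) =
      2 * (Fintype.card ι * if a = b then 1 else 0) - 2 := by
  simp only [sub_mul, mul_sub, Finset.sum_sub_distrib, ite_mul, one_mul, zero_mul,
    Finset.sum_ite_eq, Finset.mem_univ, if_true, Finset.sum_const, Finset.card_univ, nsmul_eq_mul]
  split_ifs <;> simp_all <;> ring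

def signDiag {n : ℕ} (i j : Fin n) : Matrix (Fin n) (Fin n) ℂ :=
  diagonal fun k => (if k = i then 1 else 0) - if k = j then 1 else 0

lemma two_smul_card_smul_deph_sub {n : ℕ} (ρ : Matrix (Fin n) (Fin n) ℂ) :
    (2 : ℂ) • ((n : ℂ) • deph ρ - ρ) =
      ∑ p : Fin n × Fin n, signDiag p.1 p.2 * ρ * (signDiag p.1 p.2)ᴴ := by
  ext a b
  have hsum := sum_sum_ite_sub_mul_ite_sub (R := ℂ) a b
  rw [Fintype.card_fin] at hsum
  simp only [deph, signDiag, Matrix.smul_apply, Matrix.sub_apply, diagonal_apply, smul_eq_mul,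
    mul_ite, mul_zero, diagonal_conjTranspose, Matrix.sum_apply, mul_diagonal, diagonal_mul,
    Pi.star_apply, star_sub, apply_ite (star : ℂ → ℂ), star_one, star_zero, Fintype.sum_prod_type,
    mul_right_comm _ (ρ a b), ← Finset.sum_mul, hsum]
  split_ifs with hab <;> [subst hab; skip] <;> ring

lemma Matrix.PosSemidef.card_smul_deph_sub {n : ℕ} {ρ : Matrix (Fin n) (Fin n) ℂ}
    (hρ : ρ.PosSemidef) : ((n : ℂ) • deph ρ - ρ).PosSemidef := by
  have hsum : ((2 : ℂ) • ((n : ℂ) • deph ρ - ρ)).PosSemidef := by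
    rw [two_smul_card_smul_deph_sub]
    exact posSemidef_sum _ fun p _ => hρ.mul_mul_conjTranspose_same _
  simpa using hsum.smul (a := (2⁻¹ : ℂ)) (by norm_num [Complex.le_def])

lemma card_mem_cmaxFeasible {n : ℕ} {ρ : Matrix (Fin n) (Fin n) ℂ} (hρ : ρ.PosSemidef) :
    (n : ℝ) ∈ cmaxFeasible ρ :=
  ⟨n.cast_nonneg, by simpa using hρ.card_smul_deph_sub⟩

lemma one_le_of_mem_cmaxFeasible {n : ℕ} {ρ : Matrix (Fin n) (Fin n) ℂ} (hρtr : ρ.trace = 1)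
    {lam : ℝ} (h : lam ∈ cmaxFeasible ρ) : 1 ≤ lam := by
  have htr := h.2.trace_nonneg
  rw [trace_sub, trace_smul, deph_trace, hρtr, smul_eq_mul, mul_one, sub_nonneg] at htr
  exact_mod_cast htr

lemma Real.logb_le_logb_of_nonneg_of_one_le {b x y : ℝ} (hb : 1 < b) (hx : 0 ≤ x)
    (hxy : x ≤ y) (hy : 1 ≤ y) : Real.logb b x ≤ Real.logb b y := by
  rcases le_or_gt x 1 with hx1 | hx1
  · exact (Real.logb_nonpos hb hx hx1).trans (Real.logb_nonneg hb hy)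
  · exact Real.logb_le_logb_of_le hb (by linarith) hxy

theorem cmax_delta_monotone_DIO_general (d : ℕ)
    (Λ : Matrix (Fin d) (Fin d) ℂ →ₗ[ℂ] Matrix (Fin d) (Fin d) ℂ)
    (hCP : IsCP d d Λ)
    (hcov : ∀ X : Matrix (Fin d) (Fin d) ℂ, Λ (deph X) = deph (Λ X))
    (ρ : Matrix (Fin d) (Fin d) ℂ) (hρ : ρ.PosSemidef) (hρtr : ρ.trace = 1) :
    Real.logb 2
        (sInf {lam : ℝ | 0 ≤ lam ∧ ((lam : ℂ) • deph (Λ ρ) - Λ ρ).PosSemidef}) ≤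
      Real.logb 2
        (sInf {lam : ℝ | 0 ≤ lam ∧ ((lam : ℂ) • deph ρ - ρ).PosSemidef}) := by
  change Real.logb 2 (sInf (cmaxFeasible (Λ ρ))) ≤ Real.logb 2 (sInf (cmaxFeasible ρ))
  have hne : (cmaxFeasible ρ).Nonempty := ⟨d, card_mem_cmaxFeasible hρ⟩
  have hle : sInf (cmaxFeasible (Λ ρ)) ≤ sInf (cmaxFeasible ρ) :=
    csInf_le_csInf ⟨0, fun _ h => h.1⟩ hne (cmaxFeasible_subset_apply hCP hcov ρ)
  have hone : 1 ≤ sInf (cmaxFeasible ρ) :=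
    le_csInf hne fun _ h => one_le_of_mem_cmaxFeasible hρtr h
  exact Real.logb_le_logb_of_nonneg_of_one_le one_lt_two
    (Real.sInf_nonneg fun _ h => h.1) hle hone

/-- `C_{max,Δ}(ρ) := log₂ min{λ ≥ 0 : ρ ≤ λΔ(ρ)}` is monotone under
dephasing-covariant incoherent operations: if `Λ` is CPTP and `Λ∘Δ = Δ∘Λ`, then
`C_{max,Δ}(Λ(ρ)) ≤ C_{max,Δ}(ρ)` for every density operator `ρ`. -/
theorem cmax_delta_monotone_DIO (d : ℕ)
    (Λ : Matrix (Fin d) (Fin d) ℂ →ₗ[ℂ] Matrix (Fin d) (Fin d) ℂ)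
    (hCP : IsCP d d Λ) (hTP : IsTP d d Λ)
    (hcov : ∀ X : Matrix (Fin d) (Fin d) ℂ, Λ (deph X) = deph (Λ X))
    (ρ : Matrix (Fin d) (Fin d) ℂ) (hρ : ρ.PosSemidef) (hρtr : ρ.trace = 1) :
    Real.logb 2
        (sInf {lam : ℝ | 0 ≤ lam ∧ ((lam : ℂ) • deph (Λ ρ) - Λ ρ).PosSemidef}) ≤
      Real.logb 2
        (sInf {lam : ℝ | 0 ≤ lam ∧ ((lam : ℂ) • deph ρ - ρ).PosSemidef}) :=
  cmax_delta_monotone_DIO_general d Λ hCP hcov ρ hρ hρtr
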